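/- arXiv:2109.04258 — 5 statements merged into one kernel-verified Lean document; each statement's English description precedes it below -/
import Mathlib

section
/- Prefix-derivation lemma: for nonterminals L₁, L₂, L₃, stack T, and terminal strings w₁, w, if L₂ →* w₁ L₃ and ({(L₁, L₃)}, T) ⇝ w, then ({(L₁, L₂)}, T) ⇝ w₁ w. -/
namespace VPG

/-- Terminals of a visibly pushdown grammar: plain, call, and return symbols. -/
inductive VTerm (Pl Ca Re : Type) : Type
  | pl : Pl → VTerm Pl Ca Re
  | ca : Ca → VTerm Pl Ca Re
  | re : Re → VTerm Pl Ca Re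

/-- Grammar symbols: terminals or nonterminals. -/
inductive VSym (N Pl Ca Re : Type) : Type
  | t : VTerm Pl Ca Re → VSym N Pl Ca Re
  | nt : N → VSym N Pl Ca Re

/-- Production rules of a well-matched VPG. -/
inductive WRule (N Pl Ca Re : Type) : Type
  | eps (L : N)
  | plain (L : N) (c : Pl) (L1 : N)
  | mat (L : N) (a : Ca) (L1 : N) (b : Re) (L2 : N)

variable {N Pl Ca Re : Type}

def WRule.lhs : WRule N Pl Ca Re → N
  | .eps L => L
  | .plain L _ _ => L
  | .mat L _ _ _ _ => L

def WRule.rhs : WRule N Pl Ca Re → List (VSym N Pl Ca Re)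
  | .eps _ => []
  | .plain _ c L1 => [.t (.pl c), .nt L1]
  | .mat _ a L1 b L2 => [.t (.ca a), .nt L1, .t (.re b), .nt L2]

/-- One derivation step of the context-free derivation relation. -/
inductive Derives1 (P : Set (WRule N Pl Ca Re)) :
    List (VSym N Pl Ca Re) → List (VSym N Pl Ca Re) → Prop
  | step (r : WRule N Pl Ca Re) (hr : r ∈ P) (pre post : List (VSym N Pl Ca Re)) :
      Derives1 P (pre ++ VSym.nt r.lhs :: post) (pre ++ r.rhs ++ post)

/-- The usual (reflexive-transitive) context-free derivation relation. -/
def Derives (P : Set (WRule N Pl Ca Re)) :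
    List (VSym N Pl Ca Re) → List (VSym N Pl Ca Re) → Prop :=
  Relation.ReflTransGen (Derives1 P)

/-- `L →* w` for a terminal string `w`. -/
def DerivesStr (P : Set (WRule N Pl Ca Re)) (L : N) (w : List (VTerm Pl Ca Re)) : Prop :=
  Derives P [VSym.nt L] (w.map VSym.t)

/-- A PDA state: a set of pairs of nonterminals. -/
abbrev PState (N : Type) := Set (N × N)

/-- A PDA stack: a list of stack symbols `[S, ‹a]` (`[]` is the empty stack `⊥`). -/
abbrev PStack (N Ca : Type) := List (PState N × Ca)

/-- Acceptance `(S, T) ⇝ w` of a terminal string by a configuration. -/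
inductive Accepts (P : Set (WRule N Pl Ca Re)) :
    PState N → PStack N Ca → List (VTerm Pl Ca Re) → Prop
  | bot {S : PState N} {w : List (VTerm Pl Ca Re)} (L1 L2 : N)
      (h : (L1, L2) ∈ S) (hd : DerivesStr P L2 w) :
      Accepts P S [] w
  | push {S S' : PState N} {a : Ca} {T' : PStack N Ca}
      {w1 w2 : List (VTerm Pl Ca Re)} (b : Re) (L1 L2 L3 L4 L5 : N)
      (h34 : (L3, L4) ∈ S) (hd : DerivesStr P L4 w1)
      (h12 : (L1, L2) ∈ S') (hrule : WRule.mat L2 a L3 b L5 ∈ P)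
      (hrec : Accepts P {(L1, L5)} T' w2) :
      Accepts P S ((S', a) :: T') (w1 ++ VTerm.re b :: w2)

/-- The derivative function for a plain symbol `c` (state part). -/
def deltaPlain (P : Set (WRule N Pl Ca Re)) (c : Pl) (S : PState N) : PState N :=
  { q | ∃ L2, (q.1, L2) ∈ S ∧ WRule.plain L2 c q.2 ∈ P }

/-- The derivative function for a call symbol `‹a` (state part). -/
def deltaCall (P : Set (WRule N Pl Ca Re)) (a : Ca) (S : PState N) : PState N :=
  { q | ∃ L1 L2 L3 L4 b, q = (L3, L3) ∧ (L1, L2) ∈ S ∧ WRule.mat L2 a L3 b L4 ∈ P }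

/-- The derivative function for a return symbol `b›` with stack top `[S1, ‹a]` (state part). -/
def deltaRet (P : Set (WRule N Pl Ca Re)) (b : Re) (S S1 : PState N) (a : Ca) : PState N :=
  { q | ∃ L1 L2 L3 L4 L5, q = (L1, L5) ∧ (L1, L2) ∈ S1 ∧ (L3, L4) ∈ S ∧
      WRule.eps L4 ∈ P ∧ WRule.mat L2 a L3 b L5 ∈ P }

/-- One transition of the recognizer PDA (derivative transition). -/
def step (P : Set (WRule N Pl Ca Re)) (cfg : PState N × PStack N Ca) (i : VTerm Pl Ca Re) :
    Option (PState N × PStack N Ca) :=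
  match i, cfg with
  | .pl c, (S, T) => some (deltaPlain P c S, T)
  | .ca a, (S, T) => some (deltaCall P a S, (S, a) :: T)
  | .re b, (S, (S1, a) :: T) => some (deltaRet P b S S1 a, T)
  | .re _, (_, []) => none

/-- Running the recognizer PDA on an input string. -/
def run (P : Set (WRule N Pl Ca Re)) :
    List (VTerm Pl Ca Re) → PState N × PStack N Ca → Option (PState N × PStack N Ca)
  | [], cfg => some cfg
  | i :: w, cfg =>
    match step P cfg i with
    | none => none
    | some cfg' => run P w cfg'

/-- An acceptance configuration: empty stack and some `(L, L') ∈ S` with `L' → ε`. -/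
def AccConfig (P : Set (WRule N Pl Ca Re)) (cfg : PState N × PStack N Ca) : Prop :=
  cfg.2 = [] ∧ ∃ L L', (L, L') ∈ cfg.1 ∧ WRule.eps L' ∈ P

/-- Acceptance of a string by the recognizer PDA constructed from the grammar. -/
def PDAAccepts (P : Set (WRule N Pl Ca Re)) (L0 : N) (w : List (VTerm Pl Ca Re)) : Prop :=
  ∃ cfg, run P w ({(L0, L0)}, []) = some cfg ∧ AccConfig P cfg


lemma derives1_context {P : Set (WRule N Pl Ca Re)} {u v : List (VSym N Pl Ca Re)}
    (x y : List (VSym N Pl Ca Re)) (h : Derives1 P u v) :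
    Derives1 P (x ++ u ++ y) (x ++ v ++ y) := by
  obtain ⟨r, hr, pre, post⟩ := h
  have h1 : x ++ (pre ++ VSym.nt r.lhs :: post) ++ y
      = (x ++ pre) ++ VSym.nt r.lhs :: (post ++ y) := by simp
  have h2 : x ++ (pre ++ r.rhs ++ post) ++ y
      = (x ++ pre) ++ r.rhs ++ (post ++ y) := by simp
  rw [h1, h2]
  exact .step r hr _ _

lemma derives_context {P : Set (WRule N Pl Ca Re)} {u v : List (VSym N Pl Ca Re)}
    (x y : List (VSym N Pl Ca Re)) (h : Derives P u v) :
    Derives P (x ++ u ++ y) (x ++ v ++ y) :=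
  Relation.ReflTransGen.lift (fun l => x ++ l ++ y) (fun _ _ => derives1_context x y) _ _ h

lemma derives_trans_str {P : Set (WRule N Pl Ca Re)} {L2 L3 : N}
    {w1 w : List (VTerm Pl Ca Re)}
    (hder : Derives P [VSym.nt L2] (w1.map VSym.t ++ [VSym.nt L3]))
    (hd : DerivesStr P L3 w) : DerivesStr P L2 (w1 ++ w) := by
  have h2 := derives_context (w1.map VSym.t) [] hd
  simp only [List.append_nil] at h2
  have : DerivesStr P L2 (w1 ++ w) := by
    unfold DerivesStr
    rw [List.map_append]
    exact Relation.ReflTransGen.trans hder h2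
  exact this

/-- Prefix-derivation lemma. -/
theorem accepts_prefix_derivation (P : Set (WRule N Pl Ca Re)) (L1 L2 L3 : N)
    (T : PStack N Ca) (w1 w : List (VTerm Pl Ca Re))
    (hder : Derives P [VSym.nt L2] (w1.map VSym.t ++ [VSym.nt L3]))
    (hacc : Accepts P {(L1, L3)} T w) :
    Accepts P {(L1, L2)} T (w1 ++ w) := by
  obtain ⟨S, hS, hacc⟩ : ∃ S, S = ({(L1, L3)} : PState N) ∧ Accepts P S T w :=
    ⟨_, rfl, hacc⟩
  cases hacc with
  | bot L1' L2' h hd =>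
    rw [hS, Set.mem_singleton_iff] at h
    injection h with h1 h2
    rw [h2] at hd
    exact .bot L1 L2 rfl (derives_trans_str hder hd)
  | push b L1' L2' L3' L4 L5 h34 hd h12 hrule hrec =>
    rw [hS, Set.mem_singleton_iff] at h34
    injection h34 with h1 h2
    rw [h2] at hd
    rw [h1] at hrule
    rw [← List.append_assoc]
    exact .push b L1' L2' L1 L2 L5 rfl (derives_trans_str hder hd) h12 hrule hrec

end VPG
end

section
/- Correctness of the plain-symbol derivative: for any plain symbol c ∈ Σ_l, PDA state S, stack T, and terminal string w, if δ_c(S) = (S', λT.T), then (S, T) ⇝ c w if and only if (S', T) ⇝ w. -/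
namespace VPG

variable {N Pl Ca Re : Type}

lemma derives1_iff {P : Set (WRule N Pl Ca Re)} {u v} :
    Derives1 P u v ↔ ∃ r pre post, r ∈ P ∧ u = pre ++ VSym.nt (WRule.lhs r) :: post ∧
      v = pre ++ r.rhs ++ post := by
  constructor
  · rintro ⟨r, hr, pre, post⟩; exact ⟨r, pre, post, hr, rfl, rfl⟩
  · rintro ⟨r, pre, post, hr, rfl, rfl⟩; exact .step r hr pre post

lemma derives_nil {P : Set (WRule N Pl Ca Re)} {v} (h : Derives P [] v) : v = [] := by
  rcases Relation.ReflTransGen.cases_head h with h | ⟨m, h1, _⟩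
  · exact h.symm
  · obtain ⟨r, pre, post, hr, heq, _⟩ := derives1_iff.mp h1
    simp at heq

lemma derives1_cons_t {P : Set (WRule N Pl Ca Re)} {x : VTerm Pl Ca Re} {u v}
    (h : Derives1 P (VSym.t x :: u) v) :
    ∃ v', v = VSym.t x :: v' ∧ Derives1 P u v' := by
  obtain ⟨r, pre, post, hr, heq, rfl⟩ := derives1_iff.mp h
  cases pre with
  | nil => simp at heq
  | cons s pre' =>
    obtain ⟨rfl, heq2⟩ : s = VSym.t x ∧ pre' ++ VSym.nt r.lhs :: post = u := by
      simpa using heq.symm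
    subst heq2
    exact ⟨pre' ++ r.rhs ++ post, by simp, .step r hr pre' post⟩

lemma derives_cons_t {P : Set (WRule N Pl Ca Re)} {x : VTerm Pl Ca Re} {u v}
    (h : Derives P (VSym.t x :: u) v) :
    ∃ v', v = VSym.t x :: v' ∧ Derives P u v' := by
  induction h with
  | refl => exact ⟨u, rfl, Relation.ReflTransGen.refl⟩
  | tail h1 h2 ih =>
    obtain ⟨v', rfl, hd⟩ := ih
    obtain ⟨v'', rfl, h2'⟩ := derives1_cons_t h2
    exact ⟨v'', rfl, hd.tail h2'⟩

lemma derives_cons_lift {P : Set (WRule N Pl Ca Re)} {u v} (s : VSym N Pl Ca Re)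
    (h : Derives P u v) : Derives P (s :: u) (s :: v) := by
  induction h with
  | refl => exact Relation.ReflTransGen.refl
  | tail h1 h2 ih =>
    refine ih.tail ?_
    cases h2 with
    | step r hr pre post =>
      have := Derives1.step (P := P) r hr (s :: pre) post
      simpa using this

lemma derivesStr_pl {P : Set (WRule N Pl Ca Re)} {L : N} {c : Pl} {w} :
    DerivesStr P L (VTerm.pl c :: w) ↔
      ∃ L1, WRule.plain L c L1 ∈ P ∧ DerivesStr P L1 w := by
  constructor
  · intro h
    rcases Relation.ReflTransGen.cases_head h with h | ⟨m, h1, h2⟩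
    · simp at h
    · obtain ⟨r, pre, post, hr, heq, rfl⟩ := derives1_iff.mp h1
      have hpre : pre = [] ∧ (VSym.nt r.lhs : VSym N Pl Ca Re) = VSym.nt L ∧ post = [] := by
        cases pre with
        | nil => simpa using heq.symm
        | cons s pre' =>
          exfalso
          have := congrArg List.length heq
          simp at this
      obtain ⟨rfl, hL, rfl⟩ := hpre
      have hL : r.lhs = L := by cases hL; rfl
      cases r with
        | eps L' =>
          have : (VTerm.pl c :: w).map (VSym.t (N := N)) = [] := derives_nil (by simpa [WRule.rhs, Derives] using h2)
          simp at this
        | plain L' c' L1 =>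
          cases hL
          have h2' : Derives P (VSym.t (VTerm.pl c') :: [VSym.nt L1])
              ((VTerm.pl c :: w).map VSym.t) := by simpa [WRule.rhs, Derives] using h2
          obtain ⟨v', hv, hd⟩ := derives_cons_t h2'
          simp only [List.map] at hv
          obtain ⟨hc, rfl⟩ := List.cons_eq_cons.mp hv
          cases hc
          exact ⟨L1, hr, hd⟩
        | mat L' a L1 b L2 =>
          cases hL
          have h2' : Derives P (VSym.t (VTerm.ca a) :: [VSym.nt L1, VSym.t (VTerm.re b), VSym.nt L2])
              ((VTerm.pl c :: w).map VSym.t) := by simpa [WRule.rhs, Derives] using h2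
          obtain ⟨v', hv, _⟩ := derives_cons_t h2'
          simp at hv
  · rintro ⟨L1, hr, hd⟩
    have h1 : Derives1 P [VSym.nt L] [VSym.t (VTerm.pl c), VSym.nt L1] := by
      have := Derives1.step (P := P) (WRule.plain L c L1) hr [] []
      simpa [WRule.lhs, WRule.rhs] using this
    have h2 : Derives P [VSym.t (VTerm.pl c), VSym.nt L1]
        ((VTerm.pl c :: w).map VSym.t) := by
      simpa using derives_cons_lift (VSym.t (VTerm.pl c)) hd
    exact Relation.ReflTransGen.head h1 h2

lemma accepts_inv {P : Set (WRule N Pl Ca Re)} {S : PState N} {T : PStack N Ca}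
    {w : List (VTerm Pl Ca Re)} (h : Accepts P S T w) :
    (T = [] ∧ ∃ L1 L2, (L1, L2) ∈ S ∧ DerivesStr P L2 w) ∨
    (∃ S1 a T' w1 b w2 L1 L2 L3 L4 L5, T = (S1, a) :: T' ∧ w = w1 ++ VTerm.re b :: w2 ∧
      (L3, L4) ∈ S ∧ DerivesStr P L4 w1 ∧ (L1, L2) ∈ S1 ∧ WRule.mat L2 a L3 b L5 ∈ P ∧
      Accepts P {(L1, L5)} T' w2) := by
  cases h with
  | bot L1 L2 h hd => exact Or.inl ⟨rfl, L1, L2, h, hd⟩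
  | push b L1 L2 L3 L4 L5 h34 hd h12 hrule hrec =>
    exact Or.inr ⟨_, _, _, _, b, _, L1, L2, L3, L4, L5, rfl, rfl, h34, hd, h12, hrule, hrec⟩

/-- Correctness of the plain-symbol derivative. -/
theorem deltaPlain_correct (P : Set (WRule N Pl Ca Re)) (c : Pl)
    (S S' : PState N) (T : PStack N Ca) (w : List (VTerm Pl Ca Re))
    (hS' : S' = deltaPlain P c S) :
    Accepts P S T (VTerm.pl c :: w) ↔ Accepts P S' T w := by
  subst hS'
  constructor
  · intro h
    rcases accepts_inv h with ⟨rfl, L1, L2, hmem, hd⟩ |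
      ⟨S1, a, T', w1, b, w2, L1, L2, L3, L4, L5, rfl, heq, h34, hd, h12, hrule, hrec⟩
    · obtain ⟨L3, hr, hd'⟩ := derivesStr_pl.mp hd
      exact .bot L1 L3 ⟨L2, hmem, hr⟩ hd'
    · cases w1 with
      | nil => simp at heq
      | cons x w1' =>
        obtain ⟨hx, rfl⟩ : VTerm.pl c = x ∧ w = w1' ++ VTerm.re b :: w2 := by
          simpa using heq
        cases hx
        obtain ⟨L4', hr, hd'⟩ := derivesStr_pl.mp hd
        exact .push b L1 L2 L3 L4' L5 ⟨L4, h34, hr⟩ hd' h12 hrule hrec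
  · intro h
    rcases accepts_inv h with ⟨rfl, L1, L3, hmem, hd⟩ |
      ⟨S1, a, T', w1, b, w2, L1, L2, L3, L4', L5, rfl, rfl, h34, hd, h12, hrule, hrec⟩
    · obtain ⟨L2, h2, hr⟩ := hmem
      exact .bot L1 L2 h2 (derivesStr_pl.mpr ⟨L3, hr, hd⟩)
    · obtain ⟨L4, h4, hr⟩ := h34
      have : Accepts P S ((S1, a) :: T') ((VTerm.pl c :: w1) ++ VTerm.re b :: w2) :=
        .push b L1 L2 L3 L4 L5 h4 (derivesStr_pl.mpr ⟨L4', hr, hd⟩) h12 hrule hrec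
      simpa using this

end VPG
end

section
/- Correctness of the call-symbol derivative: for any call symbol ‹a ∈ Σ_c, PDA state S, stack T, and terminal string w, if δ_‹a(S) = (S', λT.[S, ‹a]·T), then (S, T) ⇝ ‹a w if and only if (S', [S, ‹a]·T) ⇝ w. -/
namespace VPG

variable {N Pl Ca Re : Type}

/-! ### Auxiliary lemmas -/

section Aux
variable {P : Set (WRule N Pl Ca Re)}

lemma derives1_ctx {u v : List (VSym N Pl Ca Re)} (x y : List (VSym N Pl Ca Re))
    (h : Derives1 P u v) : Derives1 P (x ++ u ++ y) (x ++ v ++ y) := by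
  cases h with
  | step r hr pre post =>
    have h1 : x ++ (pre ++ VSym.nt r.lhs :: post) ++ y
        = (x ++ pre) ++ VSym.nt r.lhs :: (post ++ y) := by simp
    have h2 : x ++ (pre ++ r.rhs ++ post) ++ y
        = (x ++ pre) ++ r.rhs ++ (post ++ y) := by simp
    rw [h1, h2]
    exact Derives1.step r hr _ _

lemma derives_ctx {u v : List (VSym N Pl Ca Re)} (x y : List (VSym N Pl Ca Re))
    (h : Derives P u v) : Derives P (x ++ u ++ y) (x ++ v ++ y) := by
  induction h with
  | refl => exact Relation.ReflTransGen.refl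
  | tail _ hstep ih => exact ih.tail (derives1_ctx x y hstep)

/-- Tree-shaped derivations of a nonterminal. -/
inductive DerF (P : Set (WRule N Pl Ca Re)) : N → List (VTerm Pl Ca Re) → Prop
  | eps {L} (h : WRule.eps L ∈ P) : DerF P L []
  | plain {L c L1 w} (h : WRule.plain L c L1 ∈ P) (h1 : DerF P L1 w) :
      DerF P L (VTerm.pl c :: w)
  | mat {L a L1 b L2 w1 w2} (h : WRule.mat L a L1 b L2 ∈ P)
      (h1 : DerF P L1 w1) (h2 : DerF P L2 w2) :
      DerF P L (VTerm.ca a :: w1 ++ VTerm.re b :: w2)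

/-- Tree-shaped derivations of a sentential form. -/
inductive DerListF (P : Set (WRule N Pl Ca Re)) :
    List (VSym N Pl Ca Re) → List (VTerm Pl Ca Re) → Prop
  | nil : DerListF P [] []
  | t {x ss w} (h : DerListF P ss w) : DerListF P (VSym.t x :: ss) (x :: w)
  | nt {L ss w1 w2} (h1 : DerF P L w1) (h : DerListF P ss w2) :
      DerListF P (VSym.nt L :: ss) (w1 ++ w2)

lemma derF_derives {L : N} {w} (h : DerF P L w) : DerivesStr P L w := by
  induction h with
  | @eps L hr =>
    refine Relation.ReflTransGen.single ?_
    have := Derives1.step (WRule.eps L) hr [] []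
    simpa [WRule.lhs, WRule.rhs, DerivesStr] using this
  | @plain L c L1 w hr h1 ih =>
    have step1 : Derives1 P [VSym.nt L] [VSym.t (VTerm.pl c), VSym.nt L1] := by
      have := Derives1.step (WRule.plain L c L1) hr [] []
      simpa [WRule.lhs, WRule.rhs] using this
    refine Relation.ReflTransGen.head step1 ?_
    have := derives_ctx [VSym.t (VTerm.pl c)] [] ih
    simpa [DerivesStr, Derives] using this
  | @mat L a L1 b L2 w1 w2 hr h1 h2 ih1 ih2 =>
    have step1 : Derives1 P [VSym.nt L]
        [VSym.t (VTerm.ca a), VSym.nt L1, VSym.t (VTerm.re b), VSym.nt L2] := by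
      have := Derives1.step (WRule.mat L a L1 b L2) hr [] []
      simpa [WRule.lhs, WRule.rhs] using this
    refine Relation.ReflTransGen.head step1 ?_
    have s1 := derives_ctx [VSym.t (VTerm.ca a)]
        [VSym.t (VTerm.re b), VSym.nt L2] ih1
    have s2 := derives_ctx
        (VSym.t (VTerm.ca a) :: w1.map VSym.t ++ [VSym.t (VTerm.re b)]) [] ih2
    refine Relation.ReflTransGen.trans (by simpa [Derives] using s1) ?_
    simpa [DerivesStr, Derives] using s2

lemma derListF_refl (w : List (VTerm Pl Ca Re)) : DerListF P (w.map VSym.t) w := by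
  induction w with
  | nil => exact DerListF.nil
  | cons x w ih => exact DerListF.t ih

lemma derListF_of_replace {pre post : List (VSym N Pl Ca Re)} {w}
    (r : WRule N Pl Ca Re) (hr : r ∈ P)
    (h : DerListF P (pre ++ r.rhs ++ post) w) :
    DerListF P (pre ++ VSym.nt r.lhs :: post) w := by
  induction pre generalizing w with
  | nil =>
    simp only [List.nil_append] at h ⊢
    cases r with
    | eps L =>
      simp only [WRule.rhs, List.nil_append] at h
      simpa [WRule.lhs] using DerListF.nt (DerF.eps hr) h
    | plain L c L1 =>
      simp only [WRule.rhs, List.cons_append, List.nil_append] at h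
      cases h with
      | t h =>
        cases h with
        | nt h1 h =>
          have := DerListF.nt (DerF.plain hr h1) h
          simpa [WRule.lhs] using this
    | mat L a L1 b L2 =>
      simp only [WRule.rhs, List.cons_append, List.nil_append] at h
      cases h with
      | t h =>
        cases h with
        | nt h1 h =>
          cases h with
          | t h =>
            cases h with
            | nt h2 h =>
              have := DerListF.nt (DerF.mat hr h1 h2) h
              simpa [WRule.lhs] using this
  | cons s pre ih =>
    cases s with
    | t x =>
      simp only [List.cons_append] at h
      cases h with
      | t h => exact DerListF.t (ih h)
    | nt L =>
      simp only [List.cons_append] at h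
      cases h with
      | nt h1 h => exact DerListF.nt h1 (ih h)

lemma derListF_of_derives {α : List (VSym N Pl Ca Re)} {w}
    (h : Derives P α (w.map VSym.t)) : DerListF P α w := by
  induction h using Relation.ReflTransGen.head_induction_on with
  | refl => exact derListF_refl w
  | head hstep _ ih =>
    cases hstep with
    | step r hr pre post => exact derListF_of_replace r hr ih

lemma derF_of_derivesStr {L : N} {w} (h : DerivesStr P L w) : DerF P L w := by
  have h2 : DerListF P [VSym.nt L] w := derListF_of_derives h
  cases h2 with
  | nt h1 hrest =>
    cases hrest
    simpa using h1

lemma derivesStr_mat {L : N} {a b} {L3 L5 : N} {w1 w2}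
    (hr : WRule.mat L a L3 b L5 ∈ P)
    (h1 : DerivesStr P L3 w1) (h2 : DerivesStr P L5 w2) :
    DerivesStr P L (VTerm.ca a :: w1 ++ VTerm.re b :: w2) :=
  derF_derives (DerF.mat hr (derF_of_derivesStr h1) (derF_of_derivesStr h2))

lemma derivesStr_ca_inv {L : N} {a : Ca} {w}
    (h : DerivesStr P L (VTerm.ca a :: w)) :
    ∃ L3 b L5 w1 w2, WRule.mat L a L3 b L5 ∈ P ∧ w = w1 ++ VTerm.re b :: w2 ∧
      DerivesStr P L3 w1 ∧ DerivesStr P L5 w2 := by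
  have hf := derF_of_derivesStr h
  cases hf with
  | mat hr h1 h2 =>
    exact ⟨_, _, _, _, _, hr, rfl, derF_derives h1, derF_derives h2⟩

end Aux

/-- Correctness of the call-symbol derivative. -/
theorem deltaCall_correct (P : Set (WRule N Pl Ca Re)) (a : Ca)
    (S S' : PState N) (T : PStack N Ca) (w : List (VTerm Pl Ca Re))
    (hS' : S' = deltaCall P a S) :
    Accepts P S T (VTerm.ca a :: w) ↔ Accepts P S' ((S, a) :: T) w := by
  subst hS'
  constructor
  · intro h
    generalize hw0 : VTerm.ca a :: w = w0 at h
    cases h with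
    | bot L1 L2 hmem hd =>
      rw [← hw0] at hd
      obtain ⟨L3, b, L5, w1, w2, hrule, hw, hd1, hd2⟩ := derivesStr_ca_inv hd
      subst hw
      exact Accepts.push b L1 L2 L3 L3 L5
        ⟨L1, L2, L3, L5, b, rfl, hmem, hrule⟩ hd1 hmem hrule
        (Accepts.bot L1 L5 rfl hd2)
    | @push _ S1 a1 T'' w1' w2' b1 L1 L2 L3 L4 L5 h34 hd h12 hrule hrec =>
      match w1', hw0 with
      | [], hw0 => exact absurd (List.head_eq_of_cons_eq hw0) (by simp)
      | VTerm.ca a' :: w1'', hw0 =>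
        have ha : VTerm.ca a = VTerm.ca a' := List.head_eq_of_cons_eq hw0
        have hw : w = w1'' ++ VTerm.re b1 :: w2' := List.tail_eq_of_cons_eq hw0
        cases ha
        rw [hw]
        obtain ⟨L3', b', L5', u, v, hrule', hwu, hd1, hd2⟩ := derivesStr_ca_inv hd
        subst hwu
        have hgoal : Accepts P (deltaCall P a S) ((S, a) :: (S1, a1) :: T'')
            (u ++ VTerm.re b' :: (v ++ VTerm.re b1 :: w2')) :=
          Accepts.push b' L3 L4 L3' L3' L5'
            ⟨L3, L4, L3', L5', b', rfl, h34, hrule'⟩ hd1 h34 hrule'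
            (Accepts.push b1 L1 L2 L3 L5' L5 rfl hd2 h12 hrule hrec)
        simpa using hgoal
  · intro h
    cases h with
    | @push _ _ _ _ w1 w2 b L1 L2 L3 L4 L5 h34 hd h12 hrule hrec =>
      obtain ⟨_, _, M, _, _, heq, _, _⟩ := h34
      injection heq with h3 h4
      subst h3; subst h4
      cases T with
      | nil =>
        cases hrec with
        | bot M1 M2 hmem hd2 =>
          obtain ⟨hm1, hm2⟩ : M1 = L1 ∧ M2 = L5 := by
            simpa [Prod.ext_iff] using hmem
          subst hm1; subst hm2
          exact Accepts.bot M1 L2 h12 (derivesStr_mat hrule hd hd2)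
      | cons top T' =>
        obtain ⟨S1, a1⟩ := top
        cases hrec with
        | @push _ _ _ _ u v b1 M1 M2 M3 M4 M5 hm34 hd2 hm12 hrule2 hrec2 =>
          obtain ⟨hm3, hm4⟩ : M3 = L1 ∧ M4 = L5 := by
            simpa [Prod.ext_iff] using hm34
          subst hm3; subst hm4
          have hgoal : Accepts P S ((S1, a1) :: T')
              ((VTerm.ca a :: w1 ++ VTerm.re b :: u) ++ VTerm.re b1 :: v) :=
            Accepts.push b1 M1 M2 M3 L2 M5 h12
              (derivesStr_mat hrule hd hd2) hm12 hrule2 hrec2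
          simpa using hgoal

end VPG
end

section
/- Correctness of the recognizer PDA: for the well-matched VPG G with start symbol L₀, a terminal string w ∈ Σ* satisfies L₀ →* w if and only if w is accepted by the recognizer PDA constructed from G. -/
namespace VPG

variable {N Pl Ca Re : Type}

/-! ### Auxiliary development -/

/-- Structural characterization of `L →* w` for well-matched VPGs. -/
inductive Der (P : Set (WRule N Pl Ca Re)) : N → List (VTerm Pl Ca Re) → Prop
  | eps {L} : WRule.eps L ∈ P → Der P L []
  | plain {L c L1 w} : WRule.plain L c L1 ∈ P → Der P L1 w → Der P L (.pl c :: w)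
  | mat {L a L1 b L2 w1 w2} : WRule.mat L a L1 b L2 ∈ P → Der P L1 w1 → Der P L2 w2 →
      Der P L (.ca a :: w1 ++ .re b :: w2)

lemma Derives1.append_right {P : Set (WRule N Pl Ca Re)}
    {u v : List (VSym N Pl Ca Re)} (h : Derives1 P u v) (x : List (VSym N Pl Ca Re)) :
    Derives1 P (u ++ x) (v ++ x) := by
  cases h with
  | step r hr pre post =>
    have := Derives1.step r hr pre (post ++ x)
    simpa [List.append_assoc] using this

lemma Derives1.append_left {P : Set (WRule N Pl Ca Re)}
    {u v : List (VSym N Pl Ca Re)} (h : Derives1 P u v) (x : List (VSym N Pl Ca Re)) :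
    Derives1 P (x ++ u) (x ++ v) := by
  cases h with
  | step r hr pre post =>
    have := Derives1.step r hr (x ++ pre) post
    simpa [List.append_assoc] using this

lemma Derives.append_right {P : Set (WRule N Pl Ca Re)}
    {u v : List (VSym N Pl Ca Re)} (h : Derives P u v) (x : List (VSym N Pl Ca Re)) :
    Derives P (u ++ x) (v ++ x) := by
  induction h with
  | refl => exact Relation.ReflTransGen.refl
  | tail _ h1 ih => exact ih.tail (h1.append_right x)

lemma Derives.append_left {P : Set (WRule N Pl Ca Re)}
    {u v : List (VSym N Pl Ca Re)} (h : Derives P u v) (x : List (VSym N Pl Ca Re)) :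
    Derives P (x ++ u) (x ++ v) := by
  induction h with
  | refl => exact Relation.ReflTransGen.refl
  | tail _ h1 ih => exact ih.tail (h1.append_left x)

lemma Derives.append_congr {P : Set (WRule N Pl Ca Re)}
    {u v u' v' : List (VSym N Pl Ca Re)} (h1 : Derives P u u') (h2 : Derives P v v') :
    Derives P (u ++ v) (u' ++ v') :=
  Relation.ReflTransGen.trans (h1.append_right v) (h2.append_left u')

lemma Der.toDerivesStr {P : Set (WRule N Pl Ca Re)} {L : N} {w : List (VTerm Pl Ca Re)}
    (h : Der P L w) : DerivesStr P L w := by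
  induction h with
  | eps hL =>
    exact Relation.ReflTransGen.single
      (by simpa [WRule.lhs, WRule.rhs] using Derives1.step _ hL [] [])
  | plain hr _ ih =>
    refine Relation.ReflTransGen.trans (Relation.ReflTransGen.single
      (by simpa [WRule.lhs, WRule.rhs] using Derives1.step _ hr [] [])) ?_
    simpa [Derives] using Derives.append_congr (u := [VSym.t (.pl _)])
      (Relation.ReflTransGen.refl) ih
  | @mat L' a L1 b L2 w1 w2 hr _ _ ih1 ih2 =>
    refine Relation.ReflTransGen.trans (Relation.ReflTransGen.single
      (by simpa [WRule.lhs, WRule.rhs] using Derives1.step _ hr [] [])) ?_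
    have h := Derives.append_congr (P := P)
      (Derives.append_congr (Relation.ReflTransGen.refl (a := [VSym.t (VTerm.ca a)])) ih1)
      (Derives.append_congr (Relation.ReflTransGen.refl (a := [VSym.t (VTerm.re b)])) ih2)
    simpa [Derives, DerivesStr, List.append_assoc] using h

/-- Sentential-form derivation into terminal strings, piecewise. -/
inductive DerL (P : Set (WRule N Pl Ca Re)) :
    List (VSym N Pl Ca Re) → List (VTerm Pl Ca Re) → Prop
  | nil : DerL P [] []
  | t {x α w} : DerL P α w → DerL P (.t x :: α) (x :: w)
  | nt {L α w1 w2} : Der P L w1 → DerL P α w2 → DerL P (.nt L :: α) (w1 ++ w2)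

lemma DerL.append {P : Set (WRule N Pl Ca Re)} {u v : List (VSym N Pl Ca Re)}
    {w1 w2 : List (VTerm Pl Ca Re)} (h1 : DerL P u w1) (h2 : DerL P v w2) :
    DerL P (u ++ v) (w1 ++ w2) := by
  induction h1 with
  | nil => simpa using h2
  | t _ ih => exact DerL.t ih
  | nt hd _ ih => simpa [List.append_assoc] using DerL.nt hd ih

lemma DerL.append_inv {P : Set (WRule N Pl Ca Re)} {v : List (VSym N Pl Ca Re)} :
    ∀ {u : List (VSym N Pl Ca Re)} {w : List (VTerm Pl Ca Re)}, DerL P (u ++ v) w →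
    ∃ w1 w2, w = w1 ++ w2 ∧ DerL P u w1 ∧ DerL P v w2 := by
  intro u
  induction u with
  | nil => intro w h; exact ⟨[], w, rfl, DerL.nil, h⟩
  | cons s u ih =>
    intro w h
    cases s with
    | t x =>
      cases h with
      | t h' =>
        obtain ⟨w1, w2, rfl, hu, hv⟩ := ih h'
        exact ⟨x :: w1, w2, rfl, DerL.t hu, hv⟩
    | nt L =>
      cases h with
      | nt hd h' =>
        obtain ⟨w1, w2, rfl, hu, hv⟩ := ih h'
        exact ⟨_ ++ w1, w2, by simp [List.append_assoc], DerL.nt hd hu, hv⟩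

lemma DerL.of_terminal {P : Set (WRule N Pl Ca Re)} (w : List (VTerm Pl Ca Re)) :
    DerL P (w.map VSym.t) w := by
  induction w with
  | nil => exact DerL.nil
  | cons x w ih => exact DerL.t ih

lemma DerL.rhs_der {P : Set (WRule N Pl Ca Re)} {r : WRule N Pl Ca Re}
    {w : List (VTerm Pl Ca Re)} (hr : r ∈ P) (h : DerL P r.rhs w) : Der P r.lhs w := by
  cases r with
  | eps L =>
    cases h
    exact Der.eps hr
  | plain L c L1 =>
    cases h with
    | t h1 =>
      cases h1 with
      | nt hd h2 =>
        cases h2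
        simpa [WRule.lhs] using Der.plain hr hd
  | mat L a L1 b L2 =>
    cases h with
    | t h1 =>
      cases h1 with
      | nt hd1 h2 =>
        cases h2 with
        | t h3 =>
          cases h3 with
          | nt hd2 h4 =>
            cases h4
            simpa [WRule.lhs] using Der.mat hr hd1 hd2

lemma derL_of_derives {P : Set (WRule N Pl Ca Re)} {α : List (VSym N Pl Ca Re)}
    {w : List (VTerm Pl Ca Re)} (h : Derives P α (w.map VSym.t)) : DerL P α w := by
  induction h using Relation.ReflTransGen.head_induction_on with
  | refl => exact DerL.of_terminal w
  | head h1 _ ih =>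
    cases h1 with
    | step r hr pre post =>
      obtain ⟨w1, w23, rfl, hpre, h23⟩ := DerL.append_inv (u := pre)
        (by simpa [List.append_assoc] using ih)
      obtain ⟨w2, w3, rfl, hrhs, hpost⟩ := DerL.append_inv h23
      exact DerL.append hpre (DerL.nt (DerL.rhs_der hr hrhs) hpost)

lemma der_iff_derivesStr {P : Set (WRule N Pl Ca Re)} {L : N} {w : List (VTerm Pl Ca Re)} :
    Der P L w ↔ DerivesStr P L w := by
  constructor
  · exact Der.toDerivesStr
  · intro h
    have h' := derL_of_derives (α := [VSym.nt L]) h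
    cases h' with
    | nt hd h2 => cases h2; simpa using hd

lemma Accepts.mono {P : Set (WRule N Pl Ca Re)} {S S' : PState N} {T : PStack N Ca}
    {w : List (VTerm Pl Ca Re)} (hS : S ⊆ S') (h : Accepts P S T w) : Accepts P S' T w := by
  cases h with
  | bot L1 L2 h hd => exact .bot L1 L2 (hS h) hd
  | push b L1 L2 L3 L4 L5 h34 hd h12 hrule hrec =>
    exact .push b L1 L2 L3 L4 L5 (hS h34) hd h12 hrule hrec

lemma accepts_cases {P : Set (WRule N Pl Ca Re)} {S : PState N} {T : PStack N Ca}
    {w : List (VTerm Pl Ca Re)} (h : Accepts P S T w) :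
    (T = [] ∧ ∃ L1 L2, (L1, L2) ∈ S ∧ Der P L2 w) ∨
    (∃ S' a T' w1 b w2 L1 L2 L3 L4 L5, T = (S', a) :: T' ∧ w = w1 ++ VTerm.re b :: w2 ∧
      (L3, L4) ∈ S ∧ Der P L4 w1 ∧ (L1, L2) ∈ S' ∧ WRule.mat L2 a L3 b L5 ∈ P ∧
      Accepts P {(L1, L5)} T' w2) := by
  cases h with
  | bot L1 L2 h hd => exact Or.inl ⟨rfl, L1, L2, h, der_iff_derivesStr.mpr hd⟩
  | push b L1 L2 L3 L4 L5 h34 hd h12 hrule hrec =>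
    exact Or.inr ⟨_, _, _, _, _, _, L1, L2, L3, L4, L5, rfl, rfl, h34,
      der_iff_derivesStr.mpr hd, h12, hrule, hrec⟩

lemma accepts_pl {P : Set (WRule N Pl Ca Re)} {c : Pl} {S : PState N} {T : PStack N Ca}
    {w : List (VTerm Pl Ca Re)} :
    Accepts P S T (.pl c :: w) ↔ Accepts P (deltaPlain P c S) T w := by
  constructor
  · intro h
    rcases accepts_cases h with ⟨rfl, L1, L2, hmem, hd⟩ |
      ⟨S', a, T', w1, b, w2, L1, L2, L3, L4, L5, rfl, hw, h34, hd, h12, hrule, hrec⟩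
    · cases hd with
      | plain hr hd' => exact .bot L1 _ ⟨L2, hmem, hr⟩ hd'.toDerivesStr
    · cases w1 with
      | nil => simp at hw
      | cons x w1' =>
        obtain ⟨hx, rfl⟩ : VTerm.pl c = x ∧ w = w1' ++ VTerm.re b :: w2 := by simpa using hw
        subst hx
        cases hd with
        | plain hr hd' =>
          exact .push b L1 L2 L3 _ L5 ⟨L4, h34, hr⟩ hd'.toDerivesStr h12 hrule hrec
  · intro h
    rcases accepts_cases h with ⟨rfl, L1, L3, hmem, hd⟩ |
      ⟨S', a, T', w1, b, w2, L1, L2m, L3, L4, L5, rfl, rfl, h34, hd, h12, hrule, hrec⟩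
    · obtain ⟨L2, h12, hr⟩ := hmem
      exact .bot L1 L2 h12 (Der.plain hr hd).toDerivesStr
    · obtain ⟨L4', h34', hr⟩ := h34
      have := Accepts.push (P := P) b L1 L2m L3 L4' L5 h34'
        (Der.plain hr hd).toDerivesStr h12 hrule hrec
      simpa using this

lemma accepts_ca {P : Set (WRule N Pl Ca Re)} {a : Ca} {S : PState N} {T : PStack N Ca}
    {w : List (VTerm Pl Ca Re)} :
    Accepts P S T (.ca a :: w) ↔ Accepts P (deltaCall P a S) ((S, a) :: T) w := by
  constructor
  · intro h
    rcases accepts_cases h with ⟨rfl, L1, L2, hmem, hd⟩ |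
      ⟨S', a0, T', w1, b, w2, L1, L2, L3, L4, L5, rfl, hw, h34, hd, h12, hrule, hrec⟩
    · cases hd with
      | mat hr hd1 hd2 =>
        rename_i L3 b L5 w1 w2
        exact .push b L1 L2 L3 L3 L5 ⟨L1, L2, L3, L5, b, rfl, hmem, hr⟩
          hd1.toDerivesStr hmem hr (.bot L1 L5 rfl hd2.toDerivesStr)
    · cases w1 with
      | nil => simp at hw
      | cons x w1' =>
        obtain ⟨hx, rfl⟩ : VTerm.ca a = x ∧ w = w1' ++ VTerm.re b :: w2 := by simpa using hw
        subst hx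
        cases hd with
        | mat hr hd1 hd2 =>
          rename_i M1 b1 M2 u1 u2
          have key : Accepts P (deltaCall P a S) ((S, a) :: (S', a0) :: T')
              (u1 ++ VTerm.re b1 :: (u2 ++ VTerm.re b :: w2)) :=
            .push b1 L3 L4 M1 M1 M2 ⟨L3, L4, M1, M2, b1, rfl, h34, hr⟩
              hd1.toDerivesStr h34 hr
              (.push b L1 L2 L3 M2 L5 rfl hd2.toDerivesStr h12 hrule hrec)
          simpa [List.append_assoc] using key
  · intro h
    rcases accepts_cases h with ⟨hT, -⟩ |
      ⟨S'', a'', T'', u1, b1, v, X1, X2, X3, X4, X5, hT, rfl, h34, hd, h12, hrule, hrec⟩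
    · simp at hT
    · simp only [List.cons.injEq, Prod.mk.injEq] at hT
      obtain ⟨⟨rfl, rfl⟩, rfl⟩ := hT
      obtain ⟨A, B, C, D, b', hq, hAB, hmat'⟩ := h34
      have h34eq : X4 = X3 := by
        have h' : X3 = C ∧ X4 = C := by simpa [Prod.ext_iff] using hq
        rw [h'.2, h'.1]
      rw [h34eq] at hd
      rcases accepts_cases hrec with ⟨rfl, Y1, Y2, hmem, hd2⟩ |
        ⟨S2, a2, T2, v1, b2, v2, Z1, Z2, Z3, Z4, Z5, rfl, rfl, h34', hd2, h12', hrule', hrec'⟩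
      · obtain ⟨hy1, hy2⟩ : Y1 = X1 ∧ Y2 = X5 := by simpa [Prod.ext_iff] using hmem
        rw [hy2] at hd2
        exact .bot X1 X2 h12 (Der.mat hrule hd hd2).toDerivesStr
      · obtain ⟨hz3, hz4⟩ : Z3 = X1 ∧ Z4 = X5 := by simpa [Prod.ext_iff] using h34'
        rw [hz4] at hd2
        rw [hz3] at hrule'
        have key : Accepts P S ((S2, a2) :: T2)
            ((VTerm.ca a :: u1 ++ VTerm.re b1 :: v1) ++ VTerm.re b2 :: v2) :=
          .push b2 Z1 Z2 X1 X2 Z5 h12 (Der.mat hrule hd hd2).toDerivesStr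
            h12' hrule' hrec'
        simpa [List.append_assoc] using key

lemma accepts_re_nil {P : Set (WRule N Pl Ca Re)} {b : Re} {S : PState N}
    {w : List (VTerm Pl Ca Re)} : ¬ Accepts P S [] (.re b :: w) := by
  intro h
  rcases accepts_cases h with ⟨-, L1, L2, -, hd⟩ |
    ⟨_, _, _, _, _, _, _, _, _, _, _, hT, -, -, -, -, -, -⟩
  · cases hd
  · simp at hT

lemma accepts_re {P : Set (WRule N Pl Ca Re)} {b : Re} {S S1 : PState N} {a : Ca}
    {T : PStack N Ca} {w : List (VTerm Pl Ca Re)} :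
    Accepts P S ((S1, a) :: T) (.re b :: w) ↔ Accepts P (deltaRet P b S S1 a) T w := by
  constructor
  · intro h
    rcases accepts_cases h with ⟨hT, -⟩ |
      ⟨S'', a'', T'', w1, b0, w2, L1, L2, L3, L4, L5, hT, hw, h34, hd, h12, hrule, hrec⟩
    · simp at hT
    · simp only [List.cons.injEq, Prod.mk.injEq] at hT
      obtain ⟨⟨rfl, rfl⟩, rfl⟩ := hT
      cases w1 with
      | cons x w1' =>
        obtain ⟨hx, -⟩ : VTerm.re b = x ∧ w = w1' ++ VTerm.re b0 :: w2 := by simpa using hw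
        subst hx
        cases hd
      | nil =>
        obtain ⟨rfl, rfl⟩ : b = b0 ∧ w = w2 := by simpa using hw
        cases hd with
        | eps heps =>
          exact hrec.mono (by
            intro q hq
            obtain rfl : q = (L1, L5) := hq
            exact ⟨L1, L2, L3, L4, L5, rfl, h12, h34, heps, hrule⟩)
  · intro h
    rcases accepts_cases h with ⟨rfl, X1, X5, hmem, hd⟩ |
      ⟨S2, a2, T2, v1, b2, v2, X1, X5p, Y3, Y4, Z5, rfl, rfl, h34', hd2, h12', hrule', hrec'⟩
    · obtain ⟨L1, L2, L3, L4, L5, heq, h12, h34, heps, hrule⟩ := hmem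
      obtain ⟨h1, h5⟩ : X1 = L1 ∧ X5 = L5 := by simpa [Prod.ext_iff] using heq
      rw [h5] at hd
      have : Accepts P S ((S1, a) :: ([] : PStack N Ca)) ([] ++ VTerm.re b :: w) :=
        .push b L1 L2 L3 L4 L5 h34 (Der.eps heps).toDerivesStr h12 hrule
          (.bot L1 L5 rfl hd.toDerivesStr)
      simpa using this
    · obtain ⟨L1, L2, L3, L4, L5, heq, h12, h34, heps, hrule⟩ := h34'
      obtain ⟨h3, h4⟩ : Y3 = L1 ∧ Y4 = L5 := by simpa [Prod.ext_iff] using heq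
      rw [h4] at hd2
      rw [h3] at hrule'
      have : Accepts P S ((S1, a) :: (S2, a2) :: T2)
          ([] ++ VTerm.re b :: (v1 ++ VTerm.re b2 :: v2)) :=
        .push b L1 L2 L3 L4 L5 h34 (Der.eps heps).toDerivesStr h12 hrule
          (.push b2 X1 X5p L1 L5 Z5 rfl hd2.toDerivesStr h12' hrule' hrec')
      simpa using this

lemma accepts_iff_run {P : Set (WRule N Pl Ca Re)} :
    ∀ (w : List (VTerm Pl Ca Re)) (S : PState N) (T : PStack N Ca),
    Accepts P S T w ↔ ∃ cfg, run P w (S, T) = some cfg ∧ AccConfig P cfg := by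
  intro w
  induction w with
  | nil =>
    intro S T
    constructor
    · intro h
      rcases accepts_cases h with ⟨rfl, L1, L2, hmem, hd⟩ |
        ⟨_, _, _, _, _, _, _, _, _, _, _, -, hw, -, -, -, -, -⟩
      · cases hd with
        | eps heps => exact ⟨(S, []), rfl, rfl, L1, L2, hmem, heps⟩
      · simp at hw
    · rintro ⟨cfg, hrun, hacc⟩
      obtain rfl : (S, T) = cfg := by simpa [run] using hrun
      obtain ⟨hT, L, L', hmem, heps⟩ := hacc
      simp only at hT
      subst hT
      exact .bot L L' hmem (Der.eps heps).toDerivesStr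
  | cons i w ih =>
    intro S T
    cases i with
    | pl c => rw [accepts_pl, ih]; rfl
    | ca a => rw [accepts_ca, ih]; rfl
    | re b =>
      cases T with
      | nil =>
        simp only [run, step]
        exact ⟨fun h => absurd h accepts_re_nil, by simp⟩
      | cons fr T' =>
        obtain ⟨S1, a⟩ := fr
        rw [accepts_re, ih]; rfl

/-- Correctness of the recognizer PDA. -/
theorem recognizer_correct (P : Set (WRule N Pl Ca Re)) (L0 : N)
    (w : List (VTerm Pl Ca Re)) :
    DerivesStr P L0 w ↔ PDAAccepts (Ca := Ca) P L0 w := by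
  rw [show (PDAAccepts (Ca := Ca) P L0 w) ↔ Accepts P {(L0, L0)} [] w from
    (accepts_iff_run w _ _).symm]
  constructor
  · intro h
    exact .bot L0 L0 rfl h
  · intro h
    rcases accepts_cases h with ⟨-, L1, L2, hmem, hd⟩ |
      ⟨_, _, _, _, _, _, _, _, _, _, _, hT, -, -, -, -, -, -⟩
    · obtain ⟨rfl, rfl⟩ : L1 = L0 ∧ L2 = L0 := by simpa [Prod.ext_iff] using hmem
      exact hd.toDerivesStr
    · simp at hT

end VPG
end

section
/- From big-step to small-step parse-tree derivation: (1) if L^true ⊢ w ↠ v, then ([], ⊥) —w→* (v, ⊥); and (2) if L^false ⊢ w ↠ v, then there exists a stack of call edges E such that ([], ⊥) —w→* (v, E). -/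
namespace VPG

/-- Production rules of a general VPG: `L → ε`, `L → i L₁`, or `L → ‹a L₁ b› L₂`. -/
inductive GRule (N Pl Ca Re : Type) : Type
  | eps (L : N)
  | lin (L : N) (i : VTerm Pl Ca Re) (L1 : N)
  | mat (L : N) (a : Ca) (L1 : N) (b : Re) (L2 : N)

/-- Tagged nonterminals `L^u`. -/
abbrev TN (N : Type) := N × Bool

/-- Parse-tree edges: plain edges `(L^u, c, L₁^u)`, call edges `(L^u, ‹a, L₁^u')`,
pending-return edges `(L^false, b›, L₁^false)`, and matching-return edges
`((L^u, L₁^true), b›, L₂^u)`.  The `dummy` edge `(L^u, _, L^u)` (with a dummy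
middle symbol) is used only for the helper initial state of the parser PDA. -/
inductive PTEdge (N Pl Ca Re : Type) : Type
  | dummy (L : TN N)
  | plain (L : TN N) (c : Pl) (L1 : TN N)
  | call (L : TN N) (a : Ca) (L1 : TN N)
  | retPend (L : TN N) (b : Re) (L1 : TN N)
  | retMat (L L1 : TN N) (b : Re) (L2 : TN N)

variable {N Pl Ca Re : Type}

/-- The well-formedness conditions of a general VPG with respect to the
partition `V = V⁰ ∪ V¹` (where `V0` is the set of well-matched nonterminals). -/
def GWellFormed (V0 : Set N) (P : Set (GRule N Pl Ca Re)) : Prop :=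
  (∀ L i L1, GRule.lin L i L1 ∈ P → L ∈ V0 → (∃ c, i = VTerm.pl c) ∧ L1 ∈ V0) ∧
  (∀ L a L1 b L2, GRule.mat L a L1 b L2 ∈ P → L1 ∈ V0 ∧ (L ∈ V0 → L2 ∈ V0))

/-- The tagged nonterminal in last position of an edge. -/
def PTEdge.dst : PTEdge N Pl Ca Re → TN N
  | .dummy L => L
  | .plain _ _ L1 => L1
  | .call _ _ L1 => L1
  | .retPend _ _ L1 => L1
  | .retMat _ _ _ L2 => L2

/-- The tagged nonterminal in first position of an edge (if the first
position is a single tagged nonterminal). -/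
def PTEdge.srcNT : PTEdge N Pl Ca Re → Option (TN N)
  | .dummy L => some L
  | .plain L _ _ => some L
  | .call L _ _ => some L
  | .retPend L _ _ => some L
  | .retMat _ _ _ _ => none

/-- The pair of tagged nonterminals in first position of a matching-return edge. -/
def PTEdge.srcPair : PTEdge N Pl Ca Re → Option (TN N × TN N)
  | .retMat L L1 _ _ => some (L, L1)
  | _ => none

def PTEdge.IsPlain (e : PTEdge N Pl Ca Re) : Prop := ∃ L c L1, e = PTEdge.plain L c L1
def PTEdge.IsCall (e : PTEdge N Pl Ca Re) : Prop := ∃ L a L1, e = PTEdge.call L a L1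
def PTEdge.IsRet (e : PTEdge N Pl Ca Re) : Prop :=
  (∃ L b L1, e = PTEdge.retPend L b L1) ∨ (∃ L L1 b L2, e = PTEdge.retMat L L1 b L2)

/-- `init(v) = L^u`: the first edge of `v` begins with the tagged nonterminal `L^u`. -/
def initIs (v : List (PTEdge N Pl Ca Re)) (Lu : TN N) : Prop :=
  ∃ e t, v = e :: t ∧ e.srcNT = some Lu

/-- `final(v) = L^u`: the last edge of `v` ends with the tagged nonterminal `L^u`. -/
def finalIs (v : List (PTEdge N Pl Ca Re)) (Lu : TN N) : Prop :=
  ∃ e, v.getLast? = some e ∧ e.dst = Lu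

/-- The side condition `v = [] ∨ final(v) = L^u` of the small-step rules. -/
def okEnd (v : List (PTEdge N Pl Ca Re)) (Lu : TN N) : Prop :=
  v = [] ∨ finalIs v Lu

/-- The big-step parse-tree derivation `L^u ⊢ w ↠ v`. -/
inductive BigStep (P : Set (GRule N Pl Ca Re)) :
    TN N → List (VTerm Pl Ca Re) → List (PTEdge N Pl Ca Re) → Prop
  | eps {L : N} {u : Bool} (h : GRule.eps L ∈ P) :
      BigStep P (L, u) [] []
  | plain {L : N} {u : Bool} {c : Pl} {L1 : N} {w1 v1}
      (h : GRule.lin L (VTerm.pl c) L1 ∈ P) (h1 : BigStep P (L1, u) w1 v1) :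
      BigStep P (L, u) (VTerm.pl c :: w1) (PTEdge.plain (L, u) c (L1, u) :: v1)
  | callPend {L : N} {a : Ca} {L1 : N} {w1 v1}
      (h : GRule.lin L (VTerm.ca a) L1 ∈ P) (h1 : BigStep P (L1, false) w1 v1) :
      BigStep P (L, false) (VTerm.ca a :: w1)
        (PTEdge.call (L, false) a (L1, false) :: v1)
  | retPend {L : N} {b : Re} {L1 : N} {w1 v1}
      (h : GRule.lin L (VTerm.re b) L1 ∈ P) (h1 : BigStep P (L1, false) w1 v1) :
      BigStep P (L, false) (VTerm.re b :: w1)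
        (PTEdge.retPend (L, false) b (L1, false) :: v1)
  | mat {L : N} {u : Bool} {a : Ca} {L1 : N} {b : Re} {L2 : N} {w1 w2 v1 v2}
      (h : GRule.mat L a L1 b L2 ∈ P)
      (h1 : BigStep P (L1, true) w1 v1) (h2 : BigStep P (L2, u) w2 v2) :
      BigStep P (L, u) (VTerm.ca a :: w1 ++ VTerm.re b :: w2)
        (PTEdge.call (L, u) a (L1, true) :: v1 ++
          PTEdge.retMat (L, u) (L1, true) b (L2, u) :: v2)

/-- The small-step parse-tree derivation `(v, E) —i→ (v', E')`, where `E` is a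
stack of call edges. -/
inductive SmallStep (P : Set (GRule N Pl Ca Re)) :
    List (PTEdge N Pl Ca Re) × List (PTEdge N Pl Ca Re) → VTerm Pl Ca Re →
    List (PTEdge N Pl Ca Re) × List (PTEdge N Pl Ca Re) → Prop
  | plain {v E} {L : N} {u : Bool} {c : Pl} {L1 : N}
      (h : GRule.lin L (VTerm.pl c) L1 ∈ P) (hv : okEnd v (L, u)) :
      SmallStep P (v, E) (VTerm.pl c) (v ++ [PTEdge.plain (L, u) c (L1, u)], E)
  | callPend {v E} {L : N} {a : Ca} {L1 : N}
      (h : GRule.lin L (VTerm.ca a) L1 ∈ P) (hv : okEnd v (L, false)) :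
      SmallStep P (v, E) (VTerm.ca a)
        (v ++ [PTEdge.call (L, false) a (L1, false)],
          PTEdge.call (L, false) a (L1, false) :: E)
  | callMat {v E} {L : N} {u : Bool} {a : Ca} {L1 : N} {b : Re} {L2 : N}
      (h : GRule.mat L a L1 b L2 ∈ P) (hv : okEnd v (L, u)) :
      SmallStep P (v, E) (VTerm.ca a)
        (v ++ [PTEdge.call (L, u) a (L1, true)],
          PTEdge.call (L, u) a (L1, true) :: E)
  | retPend {v} {L : N} {b : Re} {L1 : N}
      (h : GRule.lin L (VTerm.re b) L1 ∈ P) (hv : okEnd v (L, false)) :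
      SmallStep P (v, []) (VTerm.re b)
        (v ++ [PTEdge.retPend (L, false) b (L1, false)], [])
  | retMat {v E} {L : N} {u : Bool} {a : Ca} {L1 : N} {b : Re} {L2 L3 : N}
      (h : GRule.mat L a L1 b L2 ∈ P)
      (hv : finalIs v (L3, true)) (he : GRule.eps L3 ∈ P) :
      SmallStep P (v, PTEdge.call (L, u) a (L1, true) :: E) (VTerm.re b)
        (v ++ [PTEdge.retMat (L, u) (L1, true) b (L2, u)], E)
  | retPendPop {v E} {L3 : N} {a : Ca} {L4 L1 : N} {b : Re} {L2 : N}
      (h3 : GRule.lin L3 (VTerm.ca a) L4 ∈ P)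
      (h1 : GRule.lin L1 (VTerm.re b) L2 ∈ P) (hv : okEnd v (L1, false)) :
      SmallStep P (v, PTEdge.call (L3, false) a (L4, false) :: E) (VTerm.re b)
        (v ++ [PTEdge.retPend (L1, false) b (L2, false)], E)

/-- The reflexive-transitive closure `(v, E) —w→* (v', E')` of the small step. -/
inductive SmallSteps (P : Set (GRule N Pl Ca Re)) :
    List (PTEdge N Pl Ca Re) × List (PTEdge N Pl Ca Re) → List (VTerm Pl Ca Re) →
    List (PTEdge N Pl Ca Re) × List (PTEdge N Pl Ca Re) → Prop
  | refl (s) : SmallSteps P s [] s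
  | snoc {s s' s''} {w : List (VTerm Pl Ca Re)} {i : VTerm Pl Ca Re}
      (h1 : SmallSteps P s w s') (h2 : SmallStep P s' i s'') :
      SmallSteps P s (w ++ [i]) s''

/-- `m` contains an edge of the form `(_, _, L^u)`. -/
def endsIn (m : Set (PTEdge N Pl Ca Re)) (Lu : TN N) : Prop :=
  ∃ e ∈ m, e.dst = Lu

/-- The parser transition `p_c` for a plain symbol. -/
def pPlain (P : Set (GRule N Pl Ca Re)) (c : Pl) (m : Set (PTEdge N Pl Ca Re)) :
    Set (PTEdge N Pl Ca Re) :=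
  { e | ∃ L u L1, e = PTEdge.plain (L, u) c (L1, u) ∧ endsIn m (L, u) ∧
      GRule.lin L (VTerm.pl c) L1 ∈ P }

/-- The parser transition `p_‹a` for a call symbol. -/
def pCall (P : Set (GRule N Pl Ca Re)) (a : Ca) (m : Set (PTEdge N Pl Ca Re)) :
    Set (PTEdge N Pl Ca Re) :=
  { e | ∃ L u L1, e = PTEdge.call (L, u) a (L1, true) ∧ endsIn m (L, u) ∧
      ∃ b L2, GRule.mat L a L1 b L2 ∈ P } ∪
  { e | ∃ L L1, e = PTEdge.call (L, false) a (L1, false) ∧ endsIn m (L, false) ∧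
      GRule.lin L (VTerm.ca a) L1 ∈ P }

/-- The parser transition `p_b›` for a return symbol, given the stack top
`mcall` (which is `∅` when the stack is empty). -/
def pRet (P : Set (GRule N Pl Ca Re)) (b : Re) (m mcall : Set (PTEdge N Pl Ca Re)) :
    Set (PTEdge N Pl Ca Re) :=
  { e | ∃ L u L1 L2 a, e = PTEdge.retMat (L, u) (L1, true) b (L2, u) ∧
      PTEdge.call (L, u) a (L1, true) ∈ mcall ∧ GRule.mat L a L1 b L2 ∈ P } ∪
  { e | ∃ L L1, e = PTEdge.retPend (L, false) b (L1, false) ∧ endsIn m (L, false) ∧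
      GRule.lin L (VTerm.re b) L1 ∈ P }

/-- The runtime transition `𝒫(i, m, T)` of the parser PDA. -/
def pdaStep (P : Set (GRule N Pl Ca Re)) (i : VTerm Pl Ca Re)
    (cfg : Set (PTEdge N Pl Ca Re) × List (Set (PTEdge N Pl Ca Re))) :
    Set (PTEdge N Pl Ca Re) × List (Set (PTEdge N Pl Ca Re)) :=
  match i, cfg with
  | .pl c, (m, T) => (pPlain P c m, T)
  | .ca a, (m, T) => (pCall P a m, pCall P a m :: T)
  | .re b, (m, []) => (pRet P b m ∅, [])
  | .re b, (m, mc :: T) => (pRet P b m mc, T)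

/-- The trace `[m₁, …, m_n]` of parser PDA states along an input string. -/
def pdaTrace (P : Set (GRule N Pl Ca Re)) :
    List (VTerm Pl Ca Re) → Set (PTEdge N Pl Ca Re) × List (Set (PTEdge N Pl Ca Re)) →
    List (Set (PTEdge N Pl Ca Re))
  | [], _ => []
  | i :: w, cfg => (pdaStep P i cfg).1 :: pdaTrace P w (pdaStep P i cfg)

/-- Connection of parse trees, `v₁ ⋄ v₂`. -/
def Connects (v1 v2 : List (PTEdge N Pl Ca Re)) : Prop :=
  ∃ e1 e2 t2, v1.getLast? = some e1 ∧ v2 = e2 :: t2 ∧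
    (e2.srcNT = some e1.dst ∨
      ∃ Lu, e1.srcNT = some Lu ∧ e2.srcPair = some (Lu, e1.dst))

/-- Parse-tree sets: sets of parse trees paired with stacks of call edges. -/
abbrev PTSet (N Pl Ca Re : Type) :=
  Set (List (PTEdge N Pl Ca Re) × List (PTEdge N Pl Ca Re))

/-- The helper function `F₁`, converting the first state of a parse forest to
the initial parse-tree set. -/
def F1 (m : Set (PTEdge N Pl Ca Re)) : PTSet N Pl Ca Re :=
  { p | ∃ e ∈ m,
      (e.IsCall ∧ p = ([e], [e])) ∨
      ((e.IsPlain ∨ e.IsRet) ∧ (∃ L, e.dst = (L, false)) ∧ p = ([e], [])) }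

/-- The helper function `F`, extending a parse-tree set by one state of the
parse forest. -/
def Fstep (P : Set (GRule N Pl Ca Re)) (V : PTSet N Pl Ca Re)
    (m : Set (PTEdge N Pl Ca Re)) : PTSet N Pl Ca Re :=
  { p | ∃ v E e, (v, E) ∈ V ∧ e ∈ m ∧ e.IsPlain ∧ Connects v [e] ∧
      p = (v ++ [e], E) } ∪
  { p | ∃ v E e, (v, E) ∈ V ∧ e ∈ m ∧ e.IsCall ∧ Connects v [e] ∧
      p = (v ++ [e], e :: E) } ∪
  { p | ∃ v E' e, e ∈ m ∧ e.IsRet ∧ Connects v [e] ∧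
      ((∃ e', (v, e' :: E') ∈ V) ∨ ((v, []) ∈ V ∧ E' = [])) ∧
      p = (v ++ [e], E') } ∪
  { p | ∃ v e' E' e L, e ∈ m ∧ e.IsRet ∧ (v, e' :: E') ∈ V ∧
      finalIs v (L, true) ∧ GRule.eps L ∈ P ∧ Connects [e'] [e] ∧
      p = (v ++ [e], E') }

/-- The extractor: `extract([m₁, …, m_n]) = F(… F(F₁(m₁), m₂) …, m_n)`. -/
def extract (P : Set (GRule N Pl Ca Re)) :
    List (Set (PTEdge N Pl Ca Re)) → PTSet N Pl Ca Re
  | [] => ∅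
  | m :: ms => ms.foldl (Fstep P) (F1 m)

/-- The invariants `Inv(L, w, m, T, V)` of VPG parsing. -/
def Inv (P : Set (GRule N Pl Ca Re)) (Lu : TN N) (w : List (VTerm Pl Ca Re))
    (m : Set (PTEdge N Pl Ca Re)) (T : List (Set (PTEdge N Pl Ca Re)))
    (V : PTSet N Pl Ca Re) : Prop :=
  (∀ v E, (v, E) ∈ V ↔ (SmallSteps P ([], []) w (v, E) ∧ initIs v Lu)) ∧
  (∀ v E, (v, E) ∈ V →
    (E = [] → T = []) ∧ (∀ e E', E = e :: E' → ∃ mt Tt, T = mt :: Tt ∧ e ∈ mt)) ∧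
  (∀ v, (∃ E, (v, E) ∈ V) → ∃ e ∈ m, v.getLast? = some e)


private lemma finalIs_append {l0 l : List (PTEdge N Pl Ca Re)} {Lu : TN N}
    (h : finalIs l Lu) : finalIs (l0 ++ l) Lu := by
  obtain ⟨e, he, hd⟩ := h
  refine ⟨e, ?_, hd⟩
  rw [List.getLast?_append_of_ne_nil l0 (by rintro rfl; simp at he)]
  exact he

private lemma finalIs_concat (l : List (PTEdge N Pl Ca Re)) (e : PTEdge N Pl Ca Re) :
    finalIs (l ++ [e]) e.dst :=
  ⟨e, List.getLast?_concat, rfl⟩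

private lemma SmallSteps_trans {P : Set (GRule N Pl Ca Re)} {s s' s'' w1 w2}
    (h1 : SmallSteps P s w1 s') (h2 : SmallSteps P s' w2 s'') :
    SmallSteps P s (w1 ++ w2) s'' := by
  induction h2 with
  | refl => simpa using h1
  | snoc h2 h3 ih => rw [← List.append_assoc]; exact SmallSteps.snoc ih h3

private lemma SmallSteps_single {P : Set (GRule N Pl Ca Re)} {s s' i}
    (h : SmallStep P s i s') : SmallSteps P s [i] s' :=
  SmallSteps.snoc (SmallSteps.refl s) h

/-- All edges on the stack are valid pending-call edges. -/
private def ValidE (P : Set (GRule N Pl Ca Re)) (E : List (PTEdge N Pl Ca Re)) : Prop :=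
  ∀ e ∈ E, ∃ L a L1, e = PTEdge.call (L, false) a (L1, false) ∧
    GRule.lin L (VTerm.ca a) L1 ∈ P

/-- A big-step tree is either empty with an ε-rule at the root, or ends in a
nonterminal with an ε-rule. -/
private lemma endEps {P : Set (GRule N Pl Ca Re)} {Lu w v} (hb : BigStep P Lu w v) :
    (v = [] ∧ GRule.eps Lu.1 ∈ P) ∨
      ∃ L3, finalIs v (L3, Lu.2) ∧ GRule.eps L3 ∈ P := by
  induction hb with
  | eps h => exact Or.inl ⟨rfl, h⟩
  | @plain L u c L1 w1 v1 h h1 ih =>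
    right
    rcases ih with ⟨h0, he⟩ | ⟨L3, hf, he⟩
    · subst h0; exact ⟨L1, ⟨_, rfl, rfl⟩, he⟩
    · exact ⟨L3, by rw [← List.singleton_append]; exact finalIs_append hf, he⟩
  | @callPend L a L1 w1 v1 h h1 ih =>
    right
    rcases ih with ⟨h0, he⟩ | ⟨L3, hf, he⟩
    · subst h0; exact ⟨L1, ⟨_, rfl, rfl⟩, he⟩
    · exact ⟨L3, by rw [← List.singleton_append]; exact finalIs_append hf, he⟩
  | @retPend L b L1 w1 v1 h h1 ih =>
    right
    rcases ih with ⟨h0, he⟩ | ⟨L3, hf, he⟩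
    · subst h0; exact ⟨L1, ⟨_, rfl, rfl⟩, he⟩
    · exact ⟨L3, by rw [← List.singleton_append]; exact finalIs_append hf, he⟩
  | @mat L u a L1 b L2 w1 w2 v1 v2 h h1 h2 ih1 ih2 =>
    right
    have heq : PTEdge.call (L, u) a (L1, true) :: v1 ++
        PTEdge.retMat (L, u) (L1, true) b (L2, u) :: v2 =
        (PTEdge.call (L, u) a (L1, true) :: v1 ++
          [PTEdge.retMat (L, u) (L1, true) b (L2, u)]) ++ v2 := by simp
    rcases ih2 with ⟨h0, he⟩ | ⟨L3, hf, he⟩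
    · subst h0
      refine ⟨L2, ?_, he⟩
      rw [heq]
      simpa [PTEdge.dst] using finalIs_concat (PTEdge.call (L, u) a (L1, true) :: v1)
        (PTEdge.retMat (L, u) (L1, true) b (L2, u))
    · refine ⟨L3, ?_, he⟩
      rw [heq]
      exact finalIs_append hf

/-- Key simulation lemma: a big-step derivation can be replayed by small steps
starting from any compatible configuration. -/
private lemma key {P : Set (GRule N Pl Ca Re)} {Lu w v} (hb : BigStep P Lu w v) :
    ∀ v0 E0, okEnd v0 Lu → (Lu.2 = false → ValidE P E0) →
      ∃ E1, SmallSteps P (v0, E0) w (v0 ++ v, E1) ∧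
        (Lu.2 = true → E1 = E0) ∧ (Lu.2 = false → ValidE P E1) := by
  induction hb with
  | @eps L u h =>
    intro v0 E0 hok hval
    exact ⟨E0, by simpa using SmallSteps.refl (v0, E0), fun _ => rfl, hval⟩
  | @plain L u c L1 w1 v1 h h1 ih =>
    intro v0 E0 hok hval
    have st : SmallStep P (v0, E0) (VTerm.pl c)
        (v0 ++ [PTEdge.plain (L, u) c (L1, u)], E0) := SmallStep.plain h hok
    have hok' : okEnd (v0 ++ [PTEdge.plain (L, u) c (L1, u)]) (L1, u) :=
      Or.inr (finalIs_concat _ _)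
    obtain ⟨E1, hs, ht, hf⟩ := ih _ E0 hok' hval
    refine ⟨E1, ?_, ht, hf⟩
    have := SmallSteps_trans (SmallSteps_single st) hs
    simpa using this
  | @callPend L a L1 w1 v1 h h1 ih =>
    intro v0 E0 hok hval
    have st : SmallStep P (v0, E0) (VTerm.ca a)
        (v0 ++ [PTEdge.call (L, false) a (L1, false)],
          PTEdge.call (L, false) a (L1, false) :: E0) := SmallStep.callPend h hok
    have hok' : okEnd (v0 ++ [PTEdge.call (L, false) a (L1, false)]) (L1, false) :=
      Or.inr (finalIs_concat _ _)
    have hval' : ValidE P (PTEdge.call (L, false) a (L1, false) :: E0) := by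
      intro x hx
      rcases List.mem_cons.mp hx with rfl | hx
      · exact ⟨L, a, L1, rfl, h⟩
      · exact hval rfl x hx
    obtain ⟨E1, hs, _, hf⟩ := ih _ _ hok' (fun _ => hval')
    refine ⟨E1, ?_, fun hh => absurd hh Bool.false_ne_true, hf⟩
    have := SmallSteps_trans (SmallSteps_single st) hs
    simpa using this
  | @retPend L b L1 w1 v1 h h1 ih =>
    intro v0 E0 hok hval
    have hvalE := hval rfl
    obtain ⟨E', st, hval'⟩ : ∃ E', SmallStep P (v0, E0) (VTerm.re b)
        (v0 ++ [PTEdge.retPend (L, false) b (L1, false)], E') ∧ ValidE P E' := by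
      cases E0 with
      | nil => exact ⟨[], SmallStep.retPend h hok, fun x hx => absurd hx List.not_mem_nil⟩
      | cons e0 E' =>
        obtain ⟨L3, a, L4, rfl, h3⟩ := hvalE e0 List.mem_cons_self
        exact ⟨E', SmallStep.retPendPop h3 h hok,
          fun x hx => hvalE x (List.mem_cons_of_mem _ hx)⟩
    have hok' : okEnd (v0 ++ [PTEdge.retPend (L, false) b (L1, false)]) (L1, false) :=
      Or.inr (finalIs_concat _ _)
    obtain ⟨E1, hs, _, hf⟩ := ih _ E' hok' (fun _ => hval')
    refine ⟨E1, ?_, fun hh => absurd hh Bool.false_ne_true, hf⟩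
    have := SmallSteps_trans (SmallSteps_single st) hs
    simpa using this
  | @mat L u a L1 b L2 w1 w2 v1 v2 h h1 h2 ih1 ih2 =>
    intro v0 E0 hok hval
    have st1 : SmallStep P (v0, E0) (VTerm.ca a)
        (v0 ++ [PTEdge.call (L, u) a (L1, true)],
          PTEdge.call (L, u) a (L1, true) :: E0) := SmallStep.callMat h hok
    have hok1 : okEnd (v0 ++ [PTEdge.call (L, u) a (L1, true)]) (L1, true) :=
      Or.inr (finalIs_concat _ _)
    obtain ⟨E1, hs1, ht1, _⟩ := ih1 (v0 ++ [PTEdge.call (L, u) a (L1, true)])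
      (PTEdge.call (L, u) a (L1, true) :: E0) hok1
      (fun hh => absurd hh (Bool.false_ne_true ∘ Eq.symm))
    have hE1 : E1 = PTEdge.call (L, u) a (L1, true) :: E0 := ht1 rfl
    subst hE1
    obtain ⟨L3, hf3, he3⟩ : ∃ L3,
        finalIs (v0 ++ [PTEdge.call (L, u) a (L1, true)] ++ v1) (L3, true) ∧
          GRule.eps L3 ∈ P := by
      rcases endEps h1 with ⟨h0, he⟩ | ⟨L3, hf, he⟩
      · subst h0
        exact ⟨L1, by simpa [PTEdge.dst] using finalIs_concat v0 (PTEdge.call (L, u) a (L1, true)), he⟩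
      · exact ⟨L3, finalIs_append hf, he⟩
    have st2 : SmallStep P (v0 ++ [PTEdge.call (L, u) a (L1, true)] ++ v1,
        PTEdge.call (L, u) a (L1, true) :: E0) (VTerm.re b)
        (v0 ++ [PTEdge.call (L, u) a (L1, true)] ++ v1 ++
          [PTEdge.retMat (L, u) (L1, true) b (L2, u)], E0) :=
      SmallStep.retMat h hf3 he3
    have hok2 : okEnd (v0 ++ [PTEdge.call (L, u) a (L1, true)] ++ v1 ++
        [PTEdge.retMat (L, u) (L1, true) b (L2, u)]) (L2, u) :=
      Or.inr (finalIs_concat _ _)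
    obtain ⟨E2, hs2, ht2, hf2⟩ := ih2 _ E0 hok2 hval
    refine ⟨E2, ?_, ht2, hf2⟩
    have := SmallSteps_trans (SmallSteps_single st1)
      (SmallSteps_trans hs1 (SmallSteps_trans (SmallSteps_single st2) hs2))
    simpa using this

/-- From big-step to small-step parse-tree derivation. -/
theorem big_to_small (P : Set (GRule N Pl Ca Re)) (V0 : Set N)
    (hwf : GWellFormed V0 P) :
    (∀ (L : N) (w : List (VTerm Pl Ca Re)) (v : List (PTEdge N Pl Ca Re)),
      BigStep P (L, true) w v → SmallSteps P ([], []) w (v, [])) ∧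
    (∀ (L : N) (w : List (VTerm Pl Ca Re)) (v : List (PTEdge N Pl Ca Re)),
      BigStep P (L, false) w v → ∃ E, SmallSteps P ([], []) w (v, E)) := by
  constructor
  · intro L w v hb
    obtain ⟨E1, hs, ht, _⟩ := key hb [] [] (Or.inl rfl)
      (fun hh => absurd hh (Bool.false_ne_true ∘ Eq.symm))
    have hE1 : E1 = [] := ht rfl
    subst hE1
    simpa using hs
  · intro L w v hb
    obtain ⟨E1, hs, _, _⟩ := key hb [] [] (Or.inl rfl)
      (fun _ => fun x hx => absurd hx List.not_mem_nil)
    exact ⟨E1, by simpa using hs⟩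

end VPG
end
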